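/- arXiv:1405.5323 — 4 statements merged into one kernel-verified Lean document; each statement's English description precedes it below -/
import Mathlib

section
/- (Theorem 1, converse direction) Let φ be a surjective map with dom φ ⊆ ⋃_{α ∈ C_k(I)} M^α and cod φ ⊆ M^I satisfying φ_{φ_a|_β} = φ_a and φ_a|_{dom a} = a for all a ∈ dom φ and all k-element β ⊆ I. Then (i) any two elements of cod φ agreeing on at least k points of I are equal, (ii) dom φ = ⋃_{x ∈ cod φ} C_k(x), and (iii) φ_a extends a for every a ∈ dom φ; hence φ is a flow with limited intersection of worldlines. -/
/-!
Every `φ a` is recovered from any of its restrictions to a `k`-element set, since that restriction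
lies in `D` and is sent back to `φ a`. So two worldlines agreeing on `k` points share a restriction
and coincide, and a `k`-element partial function lies in `D` exactly when it is the restriction of
some worldline.
-/

section Flow

variable {ι M : Type*} {k : ℕ} {D : Set (Σ α : Set ι, (α → M))} {φ : D → (ι → M)}

theorem eq_of_eqOn_of_encard_eq
    (h1 : ∀ a : D, ∀ β : Set ι, β.encard = k →
      ∃ hb : (⟨β, fun t => φ a ↑t⟩ : Σ α : Set ι, (α → M)) ∈ D,
        φ ⟨⟨β, fun t => φ a ↑t⟩, hb⟩ = φ a)
    {a b : D} {β : Set ι} (hβ : β.encard = k) (hab : Set.EqOn (φ a) (φ b) β) :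
    φ a = φ b := by
  obtain ⟨ha, hφa⟩ := h1 a β hβ
  obtain ⟨hb, hφb⟩ := h1 b β hβ
  have hrestrict : (⟨⟨β, fun t => φ a ↑t⟩, ha⟩ : D) = ⟨⟨β, fun t => φ b ↑t⟩, hb⟩ :=
    Subtype.ext (congrArg (Sigma.mk β) (funext fun t => hab t.2))
  rw [← hφa, ← hφb, hrestrict]

theorem eq_of_le_encard_setOf_eq
    (h1 : ∀ a : D, ∀ β : Set ι, β.encard = k →
      ∃ hb : (⟨β, fun t => φ a ↑t⟩ : Σ α : Set ι, (α → M)) ∈ D,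
        φ ⟨⟨β, fun t => φ a ↑t⟩, hb⟩ = φ a)
    {a b : D} (hk : (k : ℕ∞) ≤ {t | φ a t = φ b t}.encard) : φ a = φ b := by
  obtain ⟨β, hβ_sub, hβ⟩ := Set.exists_subset_encard_eq hk
  exact eq_of_eqOn_of_encard_eq h1 hβ fun t ht => hβ_sub ht

theorem mem_iff_encard_eq_and_exists_extension
    (hD : ∀ p ∈ D, p.1.encard = k)
    (h1 : ∀ a : D, ∀ β : Set ι, β.encard = k →
      ∃ hb : (⟨β, fun t => φ a ↑t⟩ : Σ α : Set ι, (α → M)) ∈ D,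
        φ ⟨⟨β, fun t => φ a ↑t⟩, hb⟩ = φ a)
    (h2 : ∀ a : D, ∀ t : a.1.1, φ a ↑t = a.1.2 t) (p : Σ α : Set ι, (α → M)) :
    p ∈ D ↔ p.1.encard = k ∧ ∃ x ∈ Set.range φ, ∀ t : p.1, x ↑t = p.2 t := by
  refine ⟨fun hp => ⟨hD p hp, φ ⟨p, hp⟩, ⟨⟨p, hp⟩, rfl⟩, h2 ⟨p, hp⟩⟩, ?_⟩
  rintro ⟨hp, x, ⟨a, rfl⟩, hx⟩
  obtain ⟨α, f⟩ := p
  obtain rfl : (fun t : α => φ a ↑t) = f := funext hx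
  exact (h1 a α hp).1

end Flow

theorem stmt_4_general {M : Type*} (k : ℕ) (I : Set ℝ)
    (D : Set (Σ α : Set I, (α → M)))
    (hD : ∀ p ∈ D, p.1.encard = k)
    (φ : D → (I → M))
    (h1 : ∀ a : D, ∀ β : Set I, β.encard = k →
      ∃ hb : (⟨β, fun t => φ a ↑t⟩ : Σ α : Set I, (α → M)) ∈ D,
        φ ⟨⟨β, fun t => φ a ↑t⟩, hb⟩ = φ a)
    (h2 : ∀ a : D, ∀ t : a.1.1, φ a ↑t = a.1.2 t) :
    (∀ x₁ ∈ Set.range φ, ∀ x₂ ∈ Set.range φ,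
        (k : ℕ∞) ≤ {t : I | x₁ t = x₂ t}.encard → x₁ = x₂) ∧
    (D = {p | p.1.encard = (k : ℕ∞) ∧ ∃ x ∈ Set.range φ, ∀ t : p.1, x ↑t = p.2 t}) ∧
    (∀ a : D, ∀ t : a.1.1, φ a ↑t = a.1.2 t) := by
  refine ⟨?_, Set.ext (mem_iff_encard_eq_and_exists_extension hD h1 h2), h2⟩
  rintro _ ⟨a, rfl⟩ _ ⟨b, rfl⟩ hk
  exact eq_of_le_encard_setOf_eq h1 hk

/-- Theorem 1, converse direction: a surjective map satisfying the functional
equations is a flow with limited intersection of worldlines. -/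
theorem stmt_4 {M : Type*} (k : ℕ) (I : Set ℝ) (hI : (k : ℕ∞) < I.encard)
    (D : Set (Σ α : Set I, (α → M)))
    (hD : ∀ p ∈ D, p.1.encard = k)
    (φ : D → (I → M))
    (h1 : ∀ a : D, ∀ β : Set I, β.encard = k →
      ∃ hb : (⟨β, fun t => φ a ↑t⟩ : Σ α : Set I, (α → M)) ∈ D,
        φ ⟨⟨β, fun t => φ a ↑t⟩, hb⟩ = φ a)
    (h2 : ∀ a : D, ∀ t : a.1.1, φ a ↑t = a.1.2 t) :
    (∀ x₁ ∈ Set.range φ, ∀ x₂ ∈ Set.range φ,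
        (k : ℕ∞) ≤ {t : I | x₁ t = x₂ t}.encard → x₁ = x₂) ∧
    (D = {p | p.1.encard = (k : ℕ∞) ∧ ∃ x ∈ Set.range φ, ∀ t : p.1, x ↑t = p.2 t}) ∧
    (∀ a : D, ∀ t : a.1.1, φ a ↑t = a.1.2 t) :=
  stmt_4_general k I D hD φ h1 h2
end

section
/- Trigonometric reproducing identity: for all t ∈ (−π/2, π/2), distinct i, j ∈ (−π/2, π/2), distinct r, s ∈ (−π/2, π/2), and a_i, a_j ∈ ℝ, one has Σ_{(r,s)} Σ_{(i,j)} a_i · [sin(r−j)/sin(i−j)] · [sin(t−s)/sin(r−s)] = Σ_{(i,j)} a_i · [sin(t−j)/sin(i−j)], where the outer sums run over the two orderings (r,s),(s,r) and the inner sums over the two orderings (i,j),(j,i). -/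
/-!
The right-hand side is the function `f t = a_i sin (t - j) / sin (i - j) + a_j sin (t - i) / sin (j - i)`,
a linear combination of the shifted sines `t ↦ sin (t - c)`. Two-point sine interpolation at nodes
`r, s` with `sin (r - s) ≠ 0` reproduces every shifted sine (an expansion of `sin (t - c)` by the
addition formula), hence by linearity it reproduces `f`, and the left-hand side is exactly that
interpolant evaluated at `t`.
-/

open Real

noncomputable def sinInterp (x y a b t : ℝ) : ℝ :=
  a * (sin (t - y) / sin (x - y)) + b * (sin (t - x) / sin (y - x))

lemma sin_sub_ne_zero_of_mem_Ioo {x y : ℝ}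
    (hx : x ∈ Set.Ioo (-(π / 2)) (π / 2)) (hy : y ∈ Set.Ioo (-(π / 2)) (π / 2)) (hxy : x ≠ y) :
    sin (x - y) ≠ 0 := by
  obtain ⟨hx₁, hx₂⟩ := hx
  obtain ⟨hy₁, hy₂⟩ := hy
  rw [Ne, sin_eq_zero_iff_of_lt_of_lt (by linarith) (by linarith)]
  exact sub_ne_zero.mpr hxy

lemma sinInterp_sin_sub {r s : ℝ} (hrs : sin (r - s) ≠ 0) (c t : ℝ) :
    sinInterp r s (sin (r - c)) (sin (s - c)) t = sin (t - c) := by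
  have hsr : sin (s - r) = -sin (r - s) := by rw [← sin_neg, neg_sub]
  rw [sinInterp, hsr]
  field_simp
  simp only [sin_sub]
  ring

theorem sinInterp_sinInterp {r s : ℝ} (hrs : sin (r - s) ≠ 0) (i j a b t : ℝ) :
    sinInterp r s (sinInterp i j a b r) (sinInterp i j a b s) t = sinInterp i j a b t := by
  calc sinInterp r s (sinInterp i j a b r) (sinInterp i j a b s) t
      = a / sin (i - j) * sinInterp r s (sin (r - j)) (sin (s - j)) t
          + b / sin (j - i) * sinInterp r s (sin (r - i)) (sin (s - i)) t := by
        simp only [sinInterp]; ring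
    _ = sinInterp i j a b t := by
        rw [sinInterp_sin_sub hrs, sinInterp_sin_sub hrs, sinInterp]; ring

theorem stmt_10_general (t i j r s : ℝ)
    (hr : r ∈ Set.Ioo (-(π / 2)) (π / 2)) (hs : s ∈ Set.Ioo (-(π / 2)) (π / 2))
    (hrs : r ≠ s) (a_i a_j : ℝ) :
    (a_i * (sin (r - j) / sin (i - j)) * (sin (t - s) / sin (r - s)) +
        a_j * (sin (r - i) / sin (j - i)) * (sin (t - s) / sin (r - s))) +
      (a_i * (sin (s - j) / sin (i - j)) * (sin (t - r) / sin (s - r)) +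
        a_j * (sin (s - i) / sin (j - i)) * (sin (t - r) / sin (s - r))) =
    a_i * (sin (t - j) / sin (i - j)) + a_j * (sin (t - i) / sin (j - i)) := by
  have h := sinInterp_sinInterp (sin_sub_ne_zero_of_mem_Ioo hr hs hrs) i j a_i a_j t
  simp only [sinInterp] at h
  linear_combination h

/-- Trigonometric reproducing identity for the harmonic-oscillator flow. -/
theorem stmt_10 (t i j r s : ℝ)
    (ht : t ∈ Set.Ioo (-(π / 2)) (π / 2))
    (hi : i ∈ Set.Ioo (-(π / 2)) (π / 2)) (hj : j ∈ Set.Ioo (-(π / 2)) (π / 2))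
    (hr : r ∈ Set.Ioo (-(π / 2)) (π / 2)) (hs : s ∈ Set.Ioo (-(π / 2)) (π / 2))
    (hij : i ≠ j) (hrs : r ≠ s) (a_i a_j : ℝ) :
    (a_i * (sin (r - j) / sin (i - j)) * (sin (t - s) / sin (r - s)) +
        a_j * (sin (r - i) / sin (j - i)) * (sin (t - s) / sin (r - s))) +
      (a_i * (sin (s - j) / sin (i - j)) * (sin (t - r) / sin (s - r)) +
        a_j * (sin (s - i) / sin (j - i)) * (sin (t - r) / sin (s - r))) =
    a_i * (sin (t - j) / sin (i - j)) + a_j * (sin (t - i) / sin (j - i)) :=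
  stmt_10_general t i j r s hr hs hrs a_i a_j
end

section
/- (Theorem 2, converse direction) If a surjective map φ with dom φ ⊆ ⋃_{α ∈ C_k(I)} M^α and cod φ ⊆ M^I satisfies φ_{φ_a|_β} = φ_a and φ_a|_{dom a} = a for all a ∈ dom φ and k-element β ⊆ I, then the identity map ω = id_{cod φ} is a k-frontal embedding into M^I (i.e., each restriction map x ↦ x|_β is injective on cod φ), dom φ = ⋃_{σ ∈ C_k(I)} { x|_σ : x ∈ cod φ }, and φ_a = ω_{dom a}⁻¹(a) for all a ∈ dom φ. -/
/-! If `x = φ a` and `y = φ b` agree on a `k`-set `β`, then the functional equation applied to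
both gives `x = φ ⟨β, x|_β⟩ = φ ⟨β, y|_β⟩ = y`; so restriction to `β` is injective on `cod φ`,
and all the other claims follow from this and `φ_a|_{dom a} = a`. -/

section RestrictionInvariant

variable {ι M : Type*} {k : ℕ} {D : Set (Σ α : Set ι, (α → M))} {φ : D → (ι → M)}

theorem sigma_mk_restrict_eq {β : Set ι} {x : ι → M} {y : β → M} (h : ∀ t : β, x t = y t) :
    (⟨β, fun t => x t⟩ : Σ α : Set ι, (α → M)) = ⟨β, y⟩ :=
  Sigma.ext rfl (heq_of_eq (funext h))

variable (h1 : ∀ a : D, ∀ β : Set ι, β.encard = k →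
  ∃ hb : (⟨β, fun t => φ a ↑t⟩ : Σ α : Set ι, (α → M)) ∈ D,
    φ ⟨⟨β, fun t => φ a ↑t⟩, hb⟩ = φ a)
include h1

theorem eq_of_restrict_eq_of_mem_range {β : Set ι} (hβ : β.encard = k) {x₁ x₂ : ι → M}
    (hx₁ : x₁ ∈ Set.range φ) (hx₂ : x₂ ∈ Set.range φ) (h : ∀ t : β, x₁ t = x₂ t) :
    x₁ = x₂ := by
  obtain ⟨a₁, rfl⟩ := hx₁
  obtain ⟨a₂, rfl⟩ := hx₂
  obtain ⟨hb₁, e₁⟩ := h1 a₁ β hβ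
  obtain ⟨hb₂, e₂⟩ := h1 a₂ β hβ
  rw [← e₁, ← e₂]
  exact congrArg φ (Subtype.ext (sigma_mk_restrict_eq h))

theorem restrict_mem_of_mem_range {β : Set ι} (hβ : β.encard = k) {x : ι → M}
    (hx : x ∈ Set.range φ) : (⟨β, fun t => x t⟩ : Σ α : Set ι, (α → M)) ∈ D := by
  obtain ⟨a, rfl⟩ := hx
  exact (h1 a β hβ).1

end RestrictionInvariant

theorem stmt_15_general {M : Type*} (k : ℕ) (I : Set ℝ)
    (D : Set (Σ α : Set I, (α → M)))
    (hD : ∀ p ∈ D, p.1.encard = k)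
    (φ : D → (I → M))
    (h1 : ∀ a : D, ∀ β : Set I, β.encard = k →
      ∃ hb : (⟨β, fun t => φ a ↑t⟩ : Σ α : Set I, (α → M)) ∈ D,
        φ ⟨⟨β, fun t => φ a ↑t⟩, hb⟩ = φ a)
    (h2 : ∀ a : D, ∀ t : a.1.1, φ a ↑t = a.1.2 t) :
    (∀ β : Set I, β.encard = k → ∀ x₁ ∈ Set.range φ, ∀ x₂ ∈ Set.range φ,
        (∀ t : β, x₁ ↑t = x₂ ↑t) → x₁ = x₂) ∧
    (D = {p | p.1.encard = (k : ℕ∞) ∧ ∃ x ∈ Set.range φ, ∀ t : p.1, x ↑t = p.2 t}) ∧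
    (∀ a : D, (∀ t : a.1.1, φ a ↑t = a.1.2 t) ∧
      ∀ x ∈ Set.range φ, (∀ t : a.1.1, x ↑t = a.1.2 t) → x = φ a) := by
  have injective_restrict : ∀ β : Set I, β.encard = k → ∀ x₁ ∈ Set.range φ,
      ∀ x₂ ∈ Set.range φ, (∀ t : β, x₁ ↑t = x₂ ↑t) → x₁ = x₂ :=
    fun _ hβ _ hx₁ _ hx₂ => eq_of_restrict_eq_of_mem_range h1 hβ hx₁ hx₂
  refine ⟨injective_restrict, ?_, fun a => ⟨h2 a, fun x hx hxa => ?_⟩⟩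
  · ext p
    constructor
    · intro hp
      exact ⟨hD p hp, φ ⟨p, hp⟩, ⟨⟨p, hp⟩, rfl⟩, h2 ⟨p, hp⟩⟩
    · rintro ⟨hk, x, hx, hxp⟩
      simpa only [sigma_mk_restrict_eq hxp] using restrict_mem_of_mem_range h1 hk hx
  · exact injective_restrict a.1.1 (hD a.1 a.2) x hx (φ a) ⟨a, rfl⟩
      fun t => (hxa t).trans (h2 a t).symm

/-- Theorem 2, converse direction: if a surjective map φ satisfies the functional
equations, then the identity on cod φ is a k-frontal embedding into M^I,
dom φ is the set of all k-restrictions of elements of cod φ, and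
φ_a = ω_{dom a}⁻¹(a). -/
theorem stmt_15 {M : Type*} (k : ℕ) (I : Set ℝ) (hI : (k : ℕ∞) < I.encard)
    (D : Set (Σ α : Set I, (α → M)))
    (hD : ∀ p ∈ D, p.1.encard = k)
    (φ : D → (I → M))
    (h1 : ∀ a : D, ∀ β : Set I, β.encard = k →
      ∃ hb : (⟨β, fun t => φ a ↑t⟩ : Σ α : Set I, (α → M)) ∈ D,
        φ ⟨⟨β, fun t => φ a ↑t⟩, hb⟩ = φ a)
    (h2 : ∀ a : D, ∀ t : a.1.1, φ a ↑t = a.1.2 t) :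
    (∀ β : Set I, β.encard = k → ∀ x₁ ∈ Set.range φ, ∀ x₂ ∈ Set.range φ,
        (∀ t : β, x₁ ↑t = x₂ ↑t) → x₁ = x₂) ∧
    (D = {p | p.1.encard = (k : ℕ∞) ∧ ∃ x ∈ Set.range φ, ∀ t : p.1, x ↑t = p.2 t}) ∧
    (∀ a : D, (∀ t : a.1.1, φ a ↑t = a.1.2 t) ∧
      ∀ x ∈ Set.range φ, (∀ t : a.1.1, x ↑t = a.1.2 t) → x = φ a) :=
  stmt_15_general k I D hD φ h1 h2
end

section
/- (Lemma, smooth case) Let n, k ≥ 1, let G be a smooth map from an open set dom G ⊆ ℝ × (ℝⁿ)^k to ℝⁿ, and suppose the Jacobian at (t₀, w₀) ∈ dom G of the map (t, w) ↦ (t, G(t,w), ∂G/∂t (t,w), ..., ∂^{k−1}G/∂t^{k−1}(t,w)) is nonzero. Then there exist an open interval I ∋ t₀ and an open set U ∋ w₀ with I × U ⊆ dom G such that for every choice of k pairwise distinct points t₁,...,t_k ∈ I, the map U → (ℝⁿ)^k, w ↦ (G(t₁,w),...,G(t_k,w)), is injective. -/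
open Set Filter Metric Topology NNReal

lemma rolle_step (f f' : ℝ → ℝ) (c d : ℝ)
    (hder : ∀ x ∈ Set.Ioo c d, HasDerivAt f (f' x) x)
    (r : ℕ) (u : Fin (r + 1) → ℝ) (hu : StrictMono u)
    (huJ : ∀ i, u i ∈ Set.Ioo c d) (hz : ∀ i, f (u i) = 0) :
    ∃ v : Fin r → ℝ, StrictMono v ∧ (∀ i, v i ∈ Set.Ioo c d) ∧ ∀ i, f' (v i) = 0 := by
  have key : ∀ i : Fin r, ∃ x ∈ Set.Ioo (u i.castSucc) (u i.succ), deriv f x = 0 := by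
    intro i
    refine exists_deriv_eq_zero (hu (Fin.castSucc_lt_succ (i := i))) ?_ (by rw [hz, hz])
    intro x hx
    exact (hder x ⟨lt_of_lt_of_le (huJ i.castSucc).1 hx.1,
      lt_of_le_of_lt hx.2 (huJ i.succ).2⟩).continuousAt.continuousWithinAt
  choose v hv1 hv2 using key
  have hvJ : ∀ i, v i ∈ Set.Ioo c d := fun i =>
    ⟨(huJ i.castSucc).1.trans (hv1 i).1, (hv1 i).2.trans (huJ i.succ).2⟩
  refine ⟨v, ?_, hvJ, ?_⟩
  · intro i j hij
    calc v i < u i.succ := (hv1 i).2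
    _ ≤ u j.castSucc := hu.monotone (Fin.le_def.2 (by simp only [Fin.val_succ, Fin.val_castSucc]; have := Fin.lt_def.1 hij; omega))
    _ < v j := (hv1 j).1
  · intro i
    rw [← (hder (v i) (hvJ i)).deriv]
    exact hv2 i

lemma iter_rolle (ψ : ℕ → ℝ → ℝ) (c d : ℝ)
    (hder : ∀ m, ∀ x ∈ Set.Ioo c d, HasDerivAt (ψ m) (ψ (m + 1) x) x)
    (k : ℕ) (t : Fin k → ℝ) (ht : StrictMono t)
    (htJ : ∀ i, t i ∈ Set.Ioo c d) (hz : ∀ i, ψ 0 (t i) = 0) :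
    ∀ m, m < k → ∃ ξ ∈ Set.Ioo c d, ψ m ξ = 0 := by
  suffices H : ∀ m, ∃ u : Fin (k - m) → ℝ, StrictMono u ∧ (∀ i, u i ∈ Set.Ioo c d) ∧
      ∀ i, ψ m (u i) = 0 by
    intro m hm
    obtain ⟨u, _, huJ, huz⟩ := H m
    exact ⟨u ⟨0, by omega⟩, huJ _, huz _⟩
  intro m
  induction m with
  | zero => exact ⟨t, ht, htJ, hz⟩
  | succ m ih =>
    obtain ⟨u, hu, huJ, huz⟩ := ih
    by_cases hmk : m < k
    · have he : k - m = (k - (m + 1)) + 1 := by omega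
      have hcast : StrictMono (Fin.cast he.symm : Fin (k - (m+1) + 1) → Fin (k - m)) := by
        intro a b hab; rw [Fin.lt_def] at hab ⊢; exact hab
      obtain ⟨v, hv, hvJ, hvz⟩ := rolle_step (ψ m) (ψ (m + 1)) c d (hder m) (k - (m + 1))
        (u ∘ Fin.cast he.symm) (hu.comp hcast) (fun i => huJ _) (fun i => huz _)
      exact ⟨v, hv, hvJ, hvz⟩
    · refine ⟨fun i => absurd i.isLt (by omega), ?_, ?_, ?_⟩ <;>
        intro i <;> exact absurd i.isLt (by omega)

noncomputable def Dt {E F : Type*} [NormedAddCommGroup E] [NormedSpace ℝ E]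
    [NormedAddCommGroup F] [NormedSpace ℝ F]
    (G : ℝ × E → F) : ℕ → (ℝ × E → F)
  | 0 => G
  | (m + 1) => fun p => fderiv ℝ (Dt G m) p (1, 0)

variable {E F : Type*} [NormedAddCommGroup E] [NormedSpace ℝ E]
    [NormedAddCommGroup F] [NormedSpace ℝ F]
    {G : ℝ × E → F} {Ω : Set (ℝ × E)} (hΩ : IsOpen Ω)
    (hG : ContDiffOn ℝ (⊤ : ℕ∞) G Ω)

include hΩ hG

lemma Dt_contDiffOn (m : ℕ) : ContDiffOn ℝ (⊤ : ℕ∞) (Dt G m) Ω := by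
  induction m with
  | zero => exact hG
  | succ m ih =>
    exact (ih.fderiv_of_isOpen hΩ (by simp)).clm_apply contDiffOn_const

lemma Dt_hasDerivAt (m : ℕ) {p : ℝ × E} (hp : p ∈ Ω) :
    HasDerivAt (fun s => Dt G m (s, p.2)) (Dt G (m + 1) p) p.1 := by
  have hdiff : DifferentiableAt ℝ (Dt G m) p :=
    ((Dt_contDiffOn hΩ hG m).contDiffAt (hΩ.mem_nhds hp)).differentiableAt
      (by simp)
  have hline : HasDerivAt (fun s : ℝ => (s, p.2)) ((1 : ℝ), (0 : E)) p.1 :=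
    (hasDerivAt_id p.1).prodMk (hasDerivAt_const p.1 p.2)
  have := hdiff.hasFDerivAt.comp_hasDerivAt p.1 hline
  simpa [Dt, Function.comp_def] using this

lemma Dt_eq_iteratedDeriv (m : ℕ) {p : ℝ × E} (hp : p ∈ Ω) :
    iteratedDeriv m (fun s => G (s, p.2)) p.1 = Dt G m p := by
  induction m generalizing p with
  | zero => simp [Dt]
  | succ m ih =>
    rw [iteratedDeriv_succ]
    have hev : ∀ᶠ s in 𝓝 p.1, (s, p.2) ∈ Ω := by
      have hc : ContinuousAt (fun s : ℝ => (s, p.2)) p.1 :=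
        (continuous_id.prodMk continuous_const).continuousAt
      exact hc.preimage_mem_nhds (hΩ.mem_nhds (by simpa using hp))
    have heq : (fun s => iteratedDeriv m (fun s' => G (s', p.2)) s)
        =ᶠ[𝓝 p.1] (fun s => Dt G m (s, p.2)) := by
      filter_upwards [hev] with s hs
      exact ih hs
    rw [heq.deriv_eq, (Dt_hasDerivAt hΩ hG m hp).deriv]

omit hΩ hG

set_option maxHeartbeats 2000000 in
/-- The Lemma (smooth case): if the Jacobian of
(t,w) ↦ (t, G(t,w), ∂G/∂t(t,w), …, ∂^{k-1}G/∂t^{k-1}(t,w)) is nonzero at a point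
(t₀,w₀) of the open domain of the smooth map G, then there are an open interval
I ∋ t₀ and an open set U ∋ w₀ with I × U ⊆ dom G such that
ω : U → (ℝⁿ)^I, ω(w)(t) = G(t,w), is a k-frontal embedding: for every k pairwise
distinct points t₁, …, t_k ∈ I the map w ↦ (G(t₁,w), …, G(t_k,w)) is injective
on U. -/
theorem stmt_17 (n k : ℕ) (hn : 1 ≤ n) (hk : 1 ≤ k)
    (Ω : Set (ℝ × (Fin k → Fin n → ℝ))) (hΩ : IsOpen Ω)
    (G : ℝ × (Fin k → Fin n → ℝ) → (Fin n → ℝ))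
    (hG : ContDiffOn ℝ (⊤ : ℕ∞) G Ω)
    (t₀ : ℝ) (w₀ : Fin k → Fin n → ℝ) (h0 : (t₀, w₀) ∈ Ω)
    (hJ : LinearMap.det ((fderiv ℝ (fun p : ℝ × (Fin k → Fin n → ℝ) =>
        (p.1, fun i : Fin k => iteratedDeriv (i : ℕ) (fun s => G (s, p.2)) p.1))
        (t₀, w₀)).toLinearMap) ≠ 0) :
    ∃ c d : ℝ, t₀ ∈ Set.Ioo c d ∧ ∃ U : Set (Fin k → Fin n → ℝ),
      IsOpen U ∧ w₀ ∈ U ∧ Set.Ioo c d ×ˢ U ⊆ Ω ∧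
      ∀ t : Fin k → ℝ, (∀ i, t i ∈ Set.Ioo c d) → Function.Injective t →
        ∀ w₁ ∈ U, ∀ w₂ ∈ U, (∀ i, G (t i, w₁) = G (t i, w₂)) → w₁ = w₂ := by
  have hGi : ContDiffOn ℝ (⊤ : ℕ∞) G Ω := hG.of_le (by simp)
  set Ψ : ℝ × (Fin k → Fin n → ℝ) → ℝ × (Fin k → Fin n → ℝ) := fun p => (p.1, fun i : Fin k => Dt G (i : ℕ) p) with hΨdef
  set Φ : ℝ × (Fin k → Fin n → ℝ) → ℝ × (Fin k → Fin n → ℝ) := fun p =>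
    (p.1, fun i : Fin k => iteratedDeriv (i : ℕ) (fun s => G (s, p.2)) p.1) with hΦdef
  -- Ψ is smooth on Ω
  have hΨsmooth : ContDiffOn ℝ (⊤ : ℕ∞) Ψ Ω :=
    (contDiff_fst.contDiffOn).prodMk
      (contDiffOn_pi.2 fun i => Dt_contDiffOn hΩ hGi (i : ℕ))
  -- Φ = Ψ on Ω
  have hEq : Set.EqOn Φ Ψ Ω := by
    intro p hp
    simp only [hΦdef, hΨdef]
    exact Prod.ext rfl (funext fun i => Dt_eq_iteratedDeriv hΩ hGi (i : ℕ) hp)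
  have hEv : Φ =ᶠ[𝓝 (t₀, w₀)] Ψ :=
    Filter.eventuallyEq_of_mem (hΩ.mem_nhds h0) hEq
  -- strict derivative of Ψ, with nonzero determinant
  set A := fderiv ℝ Ψ (t₀, w₀) with hA
  have hstrict : HasStrictFDerivAt Ψ A (t₀, w₀) :=
    (hΨsmooth.contDiffAt (hΩ.mem_nhds h0)).hasStrictFDerivAt (by simp)
  have hdet : LinearMap.det A.toLinearMap ≠ 0 := by
    have : fderiv ℝ Φ (t₀, w₀) = A := hEv.fderiv_eq
    rwa [this] at hJ
  -- upgrade A to a continuous linear equivalence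
  let eA : (ℝ × (Fin k → Fin n → ℝ)) ≃L[ℝ] (ℝ × (Fin k → Fin n → ℝ)) := (A.toLinearMap.equivOfDetNeZero hdet).toContinuousLinearEquiv
  have heA : (eA : (ℝ × (Fin k → Fin n → ℝ)) →L[ℝ] (ℝ × (Fin k → Fin n → ℝ))) = A :=
    ContinuousLinearMap.ext fun x => rfl
  have hstrict' : HasStrictFDerivAt Ψ (eA : (ℝ × (Fin k → Fin n → ℝ)) →L[ℝ] (ℝ × (Fin k → Fin n → ℝ))) (t₀, w₀) := heA ▸ hstrict
  obtain ⟨s, hs0, hsopen, happrox⟩ := hstrict'.approximates_deriv_on_open_nhds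
  set N := ‖(eA.symm : (ℝ × (Fin k → Fin n → ℝ)) →L[ℝ] (ℝ × (Fin k → Fin n → ℝ)))‖₊ with hN
  have hanti : AntilipschitzWith (N⁻¹ - N⁻¹ / 2)⁻¹ (s.restrict Ψ) :=
    happrox.antilipschitz
      (eA.subsingleton_or_nnnorm_symm_pos.imp id fun h => NNReal.half_lt_self
        (inv_ne_zero h.ne'))
  set K : ℝ := ↑((N⁻¹ - N⁻¹ / 2)⁻¹ : ℝ≥0) with hK
  have hK0 : 0 ≤ K := NNReal.coe_nonneg _
  -- a compact neighborhood inside s ∩ Ω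
  have hsΩ : s ∩ Ω ∈ 𝓝 (t₀, w₀) := inter_mem (hsopen.mem_nhds hs0) (hΩ.mem_nhds h0)
  obtain ⟨ε, hε0, hball⟩ := Metric.nhds_basis_closedBall.mem_iff.1 hsΩ
  set Q : Set (ℝ × (Fin k → Fin n → ℝ)) := Metric.closedBall (t₀, w₀) ε with hQ
  have hQs : Q ⊆ s := fun x hx => (hball hx).1
  have hQΩ : Q ⊆ Ω := fun x hx => (hball hx).2
  -- Lipschitz bound for the Dt G m, m ≤ k, on Q
  obtain ⟨L, hL0, hLip⟩ : ∃ L : ℝ, 0 ≤ L ∧ ∀ m ≤ k, ∀ x ∈ Q, ∀ y ∈ Q,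
      ‖Dt G m x - Dt G m y‖ ≤ L * ‖x - y‖ := by
    have hbd : ∀ m : ℕ, ∃ C : ℝ, 0 ≤ C ∧ ∀ x ∈ Q, ‖fderiv ℝ (Dt G m) x‖ ≤ C := by
      intro m
      have hcont : ContinuousOn (fun x => fderiv ℝ (Dt G m) x) Q :=
        ((Dt_contDiffOn hΩ hGi m).continuousOn_fderiv_of_isOpen hΩ
          (by exact_mod_cast le_top)).mono hQΩ
      obtain ⟨C, hC⟩ := (isCompact_closedBall _ _).exists_bound_of_continuousOn hcont
      exact ⟨max C 0, le_max_right _ _, fun x hx => (hC x hx).trans (le_max_left _ _)⟩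
    choose C hC0 hCb using hbd
    refine ⟨∑ m ∈ Finset.range (k + 1), C m, Finset.sum_nonneg fun _ _ => hC0 _, ?_⟩
    intro m hm x hx y hy
    have hCle : C m ≤ ∑ m ∈ Finset.range (k + 1), C m :=
      Finset.single_le_sum (fun i _ => hC0 i) (Finset.mem_range.2 (by omega))
    have hdiff : ∀ z ∈ Q, HasFDerivWithinAt (Dt G m) (fderiv ℝ (Dt G m) z) Q z := by
      intro z hz
      exact (((Dt_contDiffOn hΩ hGi m).contDiffAt
        (hΩ.mem_nhds (hQΩ hz))).differentiableAt
        (by simp)).hasFDerivAt.hasFDerivWithinAt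
    have := (convex_closedBall (t₀, w₀) ε).norm_image_sub_le_of_norm_hasFDerivWithin_le
      hdiff (fun z hz => hCb m z hz) hy hx
    exact this.trans (by nlinarith [norm_nonneg (x - y)])
  -- choose the small parameter δ
  set δ : ℝ := min (ε / 2) (1 / (4 * (K + 1) * (L + 1))) with hδ
  have hδ0 : 0 < δ := lt_min (by linarith) (by positivity)
  have hδε : δ ≤ ε / 2 := min_le_left _ _
  have hδsmall : 2 * δ * K * L < 1 := by
    have h2 : δ ≤ 1 / (4 * (K + 1) * (L + 1)) := min_le_right _ _
    have h3 : (0:ℝ) < 4 * (K + 1) * (L + 1) := by positivity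
    have h4 : 2 * δ * K * L ≤ 2 * δ * (K + 1) * (L + 1) := by nlinarith
    have h5 : 2 * δ * (K + 1) * (L + 1) ≤ 2 * (1 / (4 * (K + 1) * (L + 1))) * (K + 1) * (L + 1) := by
      nlinarith
    have h6 : 2 * (1 / (4 * (K + 1) * (L + 1))) * (K + 1) * (L + 1) = 1 / 2 := by
      field_simp; ring
    linarith
  have hsub : Set.Ioo (t₀ - δ) (t₀ + δ) ×ˢ Metric.ball w₀ δ ⊆ Q := by
    rintro ⟨a, b⟩ ⟨ha, hb⟩
    rw [hQ, Metric.mem_closedBall, Prod.dist_eq]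
    apply max_le
    · rw [Real.dist_eq, abs_le]
      simp only [Set.mem_Ioo] at ha
      constructor <;> linarith [ha.1, ha.2]
    · have : dist b w₀ < δ := Metric.mem_ball.1 hb
      linarith
  refine ⟨t₀ - δ, t₀ + δ, ⟨by linarith, by linarith⟩, Metric.ball w₀ δ,
    Metric.isOpen_ball, Metric.mem_ball_self hδ0, hsub.trans hQΩ, ?_⟩
  intro t htI htinj w₁ hw₁ w₂ hw₂ hGeq
  -- sort the points
  set T : Finset ℝ := Finset.image t Finset.univ with hT
  have hTcard : T.card = k := by
    rw [hT, Finset.card_image_of_injective _ htinj, Finset.card_univ, Fintype.card_fin]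
  set u : Fin k → ℝ := fun i => T.orderEmbOfFin hTcard i with hu
  have humono : StrictMono u := (T.orderEmbOfFin hTcard).strictMono
  have humem : ∀ i, ∃ j, u i = t j := by
    intro i
    have : u i ∈ T := T.orderEmbOfFin_mem hTcard i
    rw [hT] at this
    simp only [Finset.mem_image, Finset.mem_univ, true_and] at this
    obtain ⟨j, hj⟩ := this
    exact ⟨j, hj.symm⟩
  have huI : ∀ i, u i ∈ Set.Ioo (t₀ - δ) (t₀ + δ) := by
    intro i; obtain ⟨j, hj⟩ := humem i; rw [hj]; exact htI j
  have hw₁Q : ∀ x ∈ Set.Ioo (t₀ - δ) (t₀ + δ), (x, w₁) ∈ Q := fun x hx => hsub ⟨hx, hw₁⟩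
  have hw₂Q : ∀ x ∈ Set.Ioo (t₀ - δ) (t₀ + δ), (x, w₂) ∈ Q := fun x hx => hsub ⟨hx, hw₂⟩
  have ht₀I : t₀ ∈ Set.Ioo (t₀ - δ) (t₀ + δ) := ⟨by linarith, by linarith⟩
  -- key estimate on derivative differences at t₀
  have key : ∀ i : Fin k, ‖Dt G (i : ℕ) (t₀, w₁) - Dt G (i : ℕ) (t₀, w₂)‖
      ≤ 2 * δ * L * ‖w₁ - w₂‖ := by
    intro i
    rw [pi_norm_le_iff_of_nonneg (by positivity)]
    intro j
    set ψ : ℕ → ℝ → ℝ := fun m x => Dt G m (x, w₁) j - Dt G m (x, w₂) j with hψ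
    have hder : ∀ m, ∀ x ∈ Set.Ioo (t₀ - δ) (t₀ + δ), HasDerivAt (ψ m) (ψ (m + 1) x) x := by
      intro m x hx
      have h1 := Dt_hasDerivAt hΩ hGi m (hQΩ (hw₁Q x hx))
      have h2 := Dt_hasDerivAt hΩ hGi m (hQΩ (hw₂Q x hx))
      exact ((ContinuousLinearMap.proj j :
          (Fin n → ℝ) →L[ℝ] ℝ).hasFDerivAt.comp_hasDerivAt x h1).sub
        ((ContinuousLinearMap.proj j :
          (Fin n → ℝ) →L[ℝ] ℝ).hasFDerivAt.comp_hasDerivAt x h2)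
    have hz0 : ∀ i', ψ 0 (u i') = 0 := by
      intro i'
      obtain ⟨jj, hjj⟩ := humem i'
      simp only [hψ, Dt, hjj, hGeq jj, sub_self]
    obtain ⟨ξ, hξI, hξ0⟩ := iter_rolle ψ _ _ hder k u humono huI hz0 (i : ℕ) i.isLt
    -- mean value estimate between ξ and t₀
    have hbound : ∀ x ∈ Set.Ioo (t₀ - δ) (t₀ + δ), ‖ψ ((i : ℕ) + 1) x‖ ≤ L * ‖w₁ - w₂‖ := by
      intro x hx
      have hcoord : ‖ψ ((i : ℕ) + 1) x‖
          ≤ ‖Dt G ((i : ℕ) + 1) (x, w₁) - Dt G ((i : ℕ) + 1) (x, w₂)‖ := by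
        simpa [hψ] using norm_le_pi_norm
          (Dt G ((i : ℕ) + 1) (x, w₁) - Dt G ((i : ℕ) + 1) (x, w₂)) j
      refine hcoord.trans ?_
      have := hLip ((i : ℕ) + 1) (by omega) (x, w₁) (hw₁Q x hx) (x, w₂) (hw₂Q x hx)
      have hnorm : ‖((x, w₁) : ℝ × (Fin k → Fin n → ℝ)) - (x, w₂)‖ = ‖w₁ - w₂‖ := by
        rw [Prod.mk_sub_mk, Prod.norm_def]
        simp [norm_nonneg]
      rwa [hnorm] at this
    have hMVT := (convex_Ioo (t₀ - δ) (t₀ + δ)).norm_image_sub_le_of_norm_hasDerivWithin_le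
      (fun x hx => (hder (i : ℕ) x hx).hasDerivWithinAt) hbound hξI ht₀I
    have hdist : ‖t₀ - ξ‖ ≤ 2 * δ := by
      rw [Real.norm_eq_abs, abs_le]
      simp only [Set.mem_Ioo] at hξI
      constructor <;> linarith [hξI.1, hξI.2]
    rw [hξ0, sub_zero] at hMVT
    calc ‖ψ (i : ℕ) t₀‖ ≤ L * ‖w₁ - w₂‖ * ‖t₀ - ξ‖ := hMVT
    _ ≤ L * ‖w₁ - w₂‖ * (2 * δ) := by
        apply mul_le_mul_of_nonneg_left hdist (by positivity)
    _ = 2 * δ * L * ‖w₁ - w₂‖ := by ring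
  -- conclude via the antilipschitz estimate
  have h1 : ((t₀, w₁) : ℝ × (Fin k → Fin n → ℝ)) ∈ s := hQs (hw₁Q t₀ ht₀I)
  have h2 : ((t₀, w₂) : ℝ × (Fin k → Fin n → ℝ)) ∈ s := hQs (hw₂Q t₀ ht₀I)
  have hd := hanti.le_mul_dist ⟨(t₀, w₁), h1⟩ ⟨(t₀, w₂), h2⟩
  simp only [Set.restrict_apply, Subtype.dist_eq] at hd
  have hdist1 : dist w₁ w₂ ≤ dist ((t₀, w₁) : ℝ × (Fin k → Fin n → ℝ)) (t₀, w₂) := by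
    rw [Prod.dist_eq]; exact le_max_right _ _
  have hdist2 : dist (Ψ (t₀, w₁)) (Ψ (t₀, w₂)) ≤ 2 * δ * L * ‖w₁ - w₂‖ := by
    rw [hΨdef, Prod.dist_eq]
    apply max_le
    · simp only [dist_self]; positivity
    · rw [dist_pi_le_iff (by positivity)]
      intro i
      rw [dist_eq_norm]
      exact key i
  have hchain : dist w₁ w₂ ≤ K * (2 * δ * L * ‖w₁ - w₂‖) := by
    refine hdist1.trans (hd.trans ?_)
    exact mul_le_mul_of_nonneg_left hdist2 hK0
  have hnd : dist w₁ w₂ = ‖w₁ - w₂‖ := dist_eq_norm _ _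
  have hfin : ‖w₁ - w₂‖ ≤ 0 := by nlinarith [norm_nonneg (w₁ - w₂), hδsmall]
  have : w₁ - w₂ = 0 := norm_le_zero_iff.1 hfin
  exact sub_eq_zero.1 this
end
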